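/- arXiv:1408.6397 — 5 statements merged into one kernel-verified Lean document; each statement's English description precedes it below -/
import Mathlib

section
/- The map F is locally Lipschitz continuous on H: for every R > 0 there exists a constant C(R, (a_n)) > 0 such that for all y, ỹ in the closed ball of radius R centered at 0 in H, ‖F(y) − F(ỹ)‖_H ≤ C(R, (a_n)) ‖y − ỹ‖_H. -/
noncomputable section

open scoped BigOperators RealInnerProductSpace
open MeasureTheory Filter

/-- The real Hilbert space ℓ² of square-summable sequences indexed by `n ≥ 1`. -/
abbrev l2 : Type := lp (fun _ : ℕ+ => ℝ) 2

/-- The real Hilbert space `H = ℝ × ℓ² × ℓ²` with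
`‖(x,u,v)‖² = |x|² + ‖u‖² + ‖v‖²`. -/
abbrev Hsp : Type := WithLp 2 (ℝ × WithLp 2 (l2 × l2))

/-- First (real) component of an element of `H`. -/
def Hx (y : Hsp) : ℝ := y.fst

/-- Second (ℓ²) component of an element of `H`. -/
def Hu (y : Hsp) : l2 := y.snd.fst

/-- Third (ℓ²) component of an element of `H`. -/
def Hv (y : Hsp) : l2 := y.snd.snd

/-- Build an element of `H` from its components. -/
def mkH (x : ℝ) (u v : l2) : Hsp := WithLp.toLp 2 (x, (WithLp.toLp 2 (u, v) : WithLp 2 (l2 × l2)))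

/-- The sequence `(a_n)` belongs to `O⁵`, i.e. `Σ (1+n²)⁵ aₙ² < ∞`. -/
def MemO5 (a : ℕ+ → ℝ) : Prop :=
  Summable fun n : ℕ+ => (1 + (n : ℝ) ^ 2) ^ 5 * a n ^ 2

/-- `F : H → H` is the drift map
`F(x,u,v) = (Σ √aₙ n (sin(nx) uₙ + cos(nx) vₙ), (√aₙ cos(nx))ₙ, (−√aₙ sin(nx))ₙ)`. -/
def IsDriftF (a : ℕ+ → ℝ) (F : Hsp → Hsp) : Prop :=
  ∀ y : Hsp,
    Hx (F y) = (∑' n : ℕ+, Real.sqrt (a n) * (n : ℝ) *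
        (Real.sin ((n : ℝ) * Hx y) * Hu y n + Real.cos ((n : ℝ) * Hx y) * Hv y n)) ∧
    (∀ n : ℕ+, Hu (F y) n = Real.sqrt (a n) * Real.cos ((n : ℝ) * Hx y)) ∧
    (∀ n : ℕ+, Hv (F y) n = -(Real.sqrt (a n) * Real.sin ((n : ℝ) * Hx y)))

/-!
Write `s(x) = (√aₙ n sin nx)ₙ` and `c(x) = (√aₙ n cos nx)ₙ`, so that the first component of `F`
is `⟪s(x), u⟫ + ⟪c(x), v⟫`. Since `sin` and `cos` are `1`-Lipschitz and bounded by `1`, the maps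
`x ↦ s(x), c(x)` into `ℓ²` are bounded by `Q₂ = (Σ aₙ n²)^½` and `Q₄`-Lipschitz with
`Q₄ = (Σ aₙ n⁴)^½`; both series converge for `a ∈ O⁵`. Cauchy–Schwarz applied to
`⟪s, u⟫ - ⟪s', u'⟫ = ⟪s, u - u'⟫ + ⟪s - s', u'⟫` bounds the first component, the other two are
`Q₂`-Lipschitz in `x`, and altogether `‖F y - F y'‖ ≤ (4 Q₂ + 2 Q₄ ‖y'‖) ‖y - y'‖`.
-/

section RealL2

variable {ι : Type*}

lemma memℓp_two_of_sq_le {c b : ι → ℝ} (hb : Summable b) (hcb : ∀ i, c i ^ 2 ≤ b i) :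
    Memℓp c 2 :=
  memℓp_gen <| hb.of_nonneg_of_le (fun _ => by positivity) fun i => by
    simpa [Real.norm_eq_abs, sq_abs] using hcb i

lemma lp.norm_le_sqrt_tsum_of_sq_le (d : lp (fun _ : ι => ℝ) 2) {b : ι → ℝ} (hb : Summable b)
    (hdb : ∀ i, d i ^ 2 ≤ b i) : ‖d‖ ≤ √(∑' i, b i) := by
  refine lp.norm_le_of_tsum_le (by norm_num) (Real.sqrt_nonneg _) ?_
  have hd : Summable fun i => d i ^ 2 := hb.of_nonneg_of_le (fun _ => sq_nonneg _) hdb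
  simp only [ENNReal.toReal_ofNat, Real.rpow_two, Real.norm_eq_abs, sq_abs,
    Real.sq_sqrt (tsum_nonneg fun i => (sq_nonneg _).trans (hdb i))]
  exact hd.tsum_le_tsum hdb hb

lemma lp.hasSum_mul (p u : lp (fun _ : ι => ℝ) 2) : HasSum (fun i => p i * u i) ⟪p, u⟫ := by
  simpa [mul_comm] using lp.hasSum_inner (𝕜 := ℝ) p u

lemma summable_mul_of_sq_le {c b : ι → ℝ} (hb : Summable b) (hcb : ∀ i, c i ^ 2 ≤ b i)
    (u : lp (fun _ : ι => ℝ) 2) : Summable fun i => c i * u i :=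
  (lp.hasSum_mul ⟨c, memℓp_two_of_sq_le hb hcb⟩ u).summable

lemma abs_tsum_mul_sub_tsum_mul_le {c c' b b' : ι → ℝ} (hb : Summable b) (hb' : Summable b')
    (hcb : ∀ i, c i ^ 2 ≤ b i) (hc'b : ∀ i, c' i ^ 2 ≤ b i) (hcc' : ∀ i, (c i - c' i) ^ 2 ≤ b' i)
    (u u' : lp (fun _ : ι => ℝ) 2) :
    |∑' i, c i * u i - ∑' i, c' i * u' i| ≤ √(∑' i, b i) * ‖u - u'‖ + √(∑' i, b' i) * ‖u'‖ := by
  set p : lp (fun _ : ι => ℝ) 2 := ⟨c, memℓp_two_of_sq_le hb hcb⟩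
  set p' : lp (fun _ : ι => ℝ) 2 := ⟨c', memℓp_two_of_sq_le hb hc'b⟩
  have hsplit : ∑' i, c i * u i - ∑' i, c' i * u' i = ⟪p, u - u'⟫ + ⟪p - p', u'⟫ := by
    rw [(lp.hasSum_mul p u).tsum_eq, (lp.hasSum_mul p' u').tsum_eq, inner_sub_right,
      inner_sub_left]
    ring
  have hp : ‖p‖ ≤ √(∑' i, b i) := lp.norm_le_sqrt_tsum_of_sq_le p hb hcb
  have hpp' : ‖p - p'‖ ≤ √(∑' i, b' i) := lp.norm_le_sqrt_tsum_of_sq_le _ hb' hcc'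
  calc |∑' i, c i * u i - ∑' i, c' i * u' i|
      ≤ ‖p‖ * ‖u - u'‖ + ‖p - p'‖ * ‖u'‖ := by
        rw [hsplit]
        exact (abs_add_le _ _).trans
          (add_le_add (abs_real_inner_le_norm _ _) (abs_real_inner_le_norm _ _))
    _ ≤ √(∑' i, b i) * ‖u - u'‖ + √(∑' i, b' i) * ‖u'‖ := by gcongr

end RealL2

section Components

lemma norm_sq_eq_Hx_Hu_Hv (z : Hsp) : ‖z‖ ^ 2 = Hx z ^ 2 + ‖Hu z‖ ^ 2 + ‖Hv z‖ ^ 2 := by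
  rw [WithLp.prod_norm_sq_eq_of_L2, WithLp.prod_norm_sq_eq_of_L2, Real.norm_eq_abs, sq_abs,
    add_assoc]
  rfl

lemma abs_Hx_le_norm (z : Hsp) : |Hx z| ≤ ‖z‖ :=
  abs_le_of_sq_le_sq (by nlinarith [norm_sq_eq_Hx_Hu_Hv z]) (norm_nonneg z)

lemma norm_Hu_le_norm (z : Hsp) : ‖Hu z‖ ≤ ‖z‖ :=
  le_of_sq_le_sq (by nlinarith [norm_sq_eq_Hx_Hu_Hv z]) (norm_nonneg z)

lemma norm_Hv_le_norm (z : Hsp) : ‖Hv z‖ ≤ ‖z‖ :=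
  le_of_sq_le_sq (by nlinarith [norm_sq_eq_Hx_Hu_Hv z]) (norm_nonneg z)

lemma norm_le_abs_Hx_add_norm_Hu_add_norm_Hv (z : Hsp) : ‖z‖ ≤ |Hx z| + ‖Hu z‖ + ‖Hv z‖ :=
  le_of_sq_le_sq (by
    nlinarith [norm_sq_eq_Hx_Hu_Hv z, sq_abs (Hx z), abs_nonneg (Hx z), norm_nonneg (Hu z),
      norm_nonneg (Hv z), mul_nonneg (norm_nonneg (Hu z)) (norm_nonneg (Hv z))])
    (by positivity)

end Components

lemma MemO5.summable_mul_pow_four {a : ℕ+ → ℝ} (hO5 : MemO5 a) (ha : ∀ n, 0 ≤ a n) :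
    Summable fun n : ℕ+ => a n * (n : ℝ) ^ 4 := by
  have hinv : Summable fun n : ℕ+ => ((n : ℝ) ^ 2)⁻¹ :=
    (Real.summable_nat_pow_inv.mpr one_lt_two).comp_injective PNat.coe_injective
  refine ((hO5.add hinv).div_const 2).of_nonneg_of_le (fun n => by have := ha n; positivity)
    fun n => ?_
  have hn : (0 : ℝ) < n := Nat.cast_pos.mpr n.pos
  -- AM-GM on `a n * n ^ 4 = (a n * n ^ 5) * n⁻¹`
  have amgm : a n * (n : ℝ) ^ 4 ≤ ((a n * (n : ℝ) ^ 5) ^ 2 + ((n : ℝ) ^ 2)⁻¹) / 2 := by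
    have := two_mul_le_add_sq (a n * (n : ℝ) ^ 5) (n : ℝ)⁻¹
    field_simp at this ⊢
    linarith
  have hpow : ((n : ℝ) ^ 2) ^ 5 ≤ (1 + (n : ℝ) ^ 2) ^ 5 := by gcongr; linarith
  calc a n * (n : ℝ) ^ 4 ≤ ((a n * (n : ℝ) ^ 5) ^ 2 + ((n : ℝ) ^ 2)⁻¹) / 2 := amgm
    _ ≤ ((1 + (n : ℝ) ^ 2) ^ 5 * a n ^ 2 + ((n : ℝ) ^ 2)⁻¹) / 2 := by
      gcongr
      nlinarith [mul_le_mul_of_nonneg_left hpow (sq_nonneg (a n))]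

lemma MemO5.summable_mul_sq {a : ℕ+ → ℝ} (hO5 : MemO5 a) (ha : ∀ n, 0 ≤ a n) :
    Summable fun n : ℕ+ => a n * (n : ℝ) ^ 2 :=
  (hO5.summable_mul_pow_four ha).of_nonneg_of_le (fun n => by have := ha n; positivity)
    fun n => mul_le_mul_of_nonneg_left
      (pow_le_pow_right₀ (Nat.one_le_cast.mpr n.pos) (by norm_num)) (ha n)

lemma sqrt_tsum_mul_sq {ι : Type*} {g : ι → ℝ} (hg : ∀ i, 0 ≤ g i) (t : ℝ) :
    √(∑' i, g i * t ^ 2) = √(∑' i, g i) * |t| := by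
  rw [tsum_mul_right, Real.sqrt_mul (tsum_nonneg hg), Real.sqrt_sq_eq_abs]

lemma sq_mul_sub_le_of_lipschitzWith {f : ℝ → ℝ} (hf : LipschitzWith 1 f) (w m x x' : ℝ) :
    (w * (f (m * x) - f (m * x'))) ^ 2 ≤ w ^ 2 * m ^ 2 * (x - x') ^ 2 := by
  have h : |f (m * x) - f (m * x')| ≤ |m * x - m * x'| := by
    simpa [Real.dist_eq] using hf.dist_le_mul (m * x) (m * x')
  calc (w * (f (m * x) - f (m * x'))) ^ 2 = w ^ 2 * |f (m * x) - f (m * x')| ^ 2 := by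
        rw [mul_pow, sq_abs]
    _ ≤ w ^ 2 * |m * x - m * x'| ^ 2 := by gcongr
    _ = w ^ 2 * m ^ 2 * (x - x') ^ 2 := by rw [sq_abs]; ring

def driftCoeff (a : ℕ+ → ℝ) (f : ℝ → ℝ) (x : ℝ) (n : ℕ+) : ℝ := √(a n) * n * f (n * x)

section DriftCoeff

variable {a : ℕ+ → ℝ} {f : ℝ → ℝ}

lemma sq_driftCoeff_le (ha : ∀ n, 0 ≤ a n) (hf : ∀ t, |f t| ≤ 1) (x : ℝ) (n : ℕ+) :
    driftCoeff a f x n ^ 2 ≤ a n * (n : ℝ) ^ 2 := by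
  have hf2 : f (n * x) ^ 2 ≤ 1 := by simpa using sq_le_one_iff_abs_le_one _ |>.mpr (hf (n * x))
  calc driftCoeff a f x n ^ 2 = a n * (n : ℝ) ^ 2 * f (n * x) ^ 2 := by
        rw [driftCoeff, mul_pow, mul_pow, Real.sq_sqrt (ha n)]
    _ ≤ a n * (n : ℝ) ^ 2 := mul_le_of_le_one_right (by have := ha n; positivity) hf2

lemma sq_driftCoeff_sub_le (ha : ∀ n, 0 ≤ a n) (hf : LipschitzWith 1 f) (x x' : ℝ) (n : ℕ+) :
    (driftCoeff a f x n - driftCoeff a f x' n) ^ 2 ≤ a n * (n : ℝ) ^ 4 * (x - x') ^ 2 := by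
  calc (driftCoeff a f x n - driftCoeff a f x' n) ^ 2
      = (√(a n) * n * (f (n * x) - f (n * x'))) ^ 2 := by simp only [driftCoeff]; ring
    _ ≤ a n * (n : ℝ) ^ 4 * (x - x') ^ 2 :=
      (sq_mul_sub_le_of_lipschitzWith hf _ _ x x').trans_eq
        (by rw [mul_pow, Real.sq_sqrt (ha n)]; ring)

lemma summable_driftCoeff_mul (ha : ∀ n, 0 ≤ a n) (hS2 : Summable fun n : ℕ+ => a n * (n : ℝ) ^ 2)
    (hf : ∀ t, |f t| ≤ 1) (x : ℝ) (u : l2) : Summable fun n => driftCoeff a f x n * u n :=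
  summable_mul_of_sq_le hS2 (sq_driftCoeff_le ha hf x) u

lemma abs_tsum_driftCoeff_mul_sub_le (ha : ∀ n, 0 ≤ a n)
    (hS2 : Summable fun n : ℕ+ => a n * (n : ℝ) ^ 2)
    (hS4 : Summable fun n : ℕ+ => a n * (n : ℝ) ^ 4) (hf : LipschitzWith 1 f)
    (hf1 : ∀ t, |f t| ≤ 1) (x x' : ℝ) (u u' : l2) :
    |∑' n, driftCoeff a f x n * u n - ∑' n, driftCoeff a f x' n * u' n| ≤
      √(∑' n : ℕ+, a n * (n : ℝ) ^ 2) * ‖u - u'‖ +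
        √(∑' n : ℕ+, a n * (n : ℝ) ^ 4) * |x - x'| * ‖u'‖ := by
  have h := abs_tsum_mul_sub_tsum_mul_le hS2 (hS4.mul_right ((x - x') ^ 2))
    (sq_driftCoeff_le ha hf1 x) (sq_driftCoeff_le ha hf1 x') (sq_driftCoeff_sub_le ha hf x x') u u'
  rwa [sqrt_tsum_mul_sq (fun n => by have := ha n; positivity)] at h

lemma norm_le_of_sq_eq_sqrt_mul_sub (ha : ∀ n, 0 ≤ a n)
    (hS2 : Summable fun n : ℕ+ => a n * (n : ℝ) ^ 2) (hf : LipschitzWith 1 f) {x x' : ℝ}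
    (d : l2) (hd : ∀ n, d n ^ 2 = (√(a n) * (f (n * x) - f (n * x'))) ^ 2) :
    ‖d‖ ≤ √(∑' n : ℕ+, a n * (n : ℝ) ^ 2) * |x - x'| := by
  rw [← sqrt_tsum_mul_sq (fun n => by have := ha n; positivity)]
  refine lp.norm_le_sqrt_tsum_of_sq_le d (hS2.mul_right _) fun n => ?_
  rw [hd]
  exact (sq_mul_sub_le_of_lipschitzWith hf _ _ x x').trans_eq (by rw [Real.sq_sqrt (ha n)])

end DriftCoeff

namespace IsDriftF

variable {a : ℕ+ → ℝ} {F : Hsp → Hsp}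

lemma Hx_eq (hF : IsDriftF a F) (ha : ∀ n, 0 ≤ a n)
    (hS2 : Summable fun n : ℕ+ => a n * (n : ℝ) ^ 2) (y : Hsp) :
    Hx (F y) = ∑' n, driftCoeff a Real.sin (Hx y) n * Hu y n +
      ∑' n, driftCoeff a Real.cos (Hx y) n * Hv y n := by
  rw [(hF y).1, ← (summable_driftCoeff_mul ha hS2 Real.abs_sin_le_one _ _).tsum_add
    (summable_driftCoeff_mul ha hS2 Real.abs_cos_le_one _ _)]
  exact tsum_congr fun n => by simp only [driftCoeff]; ring

lemma abs_Hx_sub_le (hF : IsDriftF a F) (ha : ∀ n, 0 ≤ a n)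
    (hS2 : Summable fun n : ℕ+ => a n * (n : ℝ) ^ 2)
    (hS4 : Summable fun n : ℕ+ => a n * (n : ℝ) ^ 4) (y y' : Hsp) :
    |Hx (F y) - Hx (F y')| ≤
      √(∑' n : ℕ+, a n * (n : ℝ) ^ 2) * ‖Hu y - Hu y'‖ +
        √(∑' n : ℕ+, a n * (n : ℝ) ^ 4) * |Hx y - Hx y'| * ‖Hu y'‖ +
      (√(∑' n : ℕ+, a n * (n : ℝ) ^ 2) * ‖Hv y - Hv y'‖ +
        √(∑' n : ℕ+, a n * (n : ℝ) ^ 4) * |Hx y - Hx y'| * ‖Hv y'‖) := by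
  rw [hF.Hx_eq ha hS2, hF.Hx_eq ha hS2, add_sub_add_comm]
  exact (abs_add_le _ _).trans <| add_le_add
    (abs_tsum_driftCoeff_mul_sub_le ha hS2 hS4 Real.lipschitzWith_sin Real.abs_sin_le_one _ _ _ _)
    (abs_tsum_driftCoeff_mul_sub_le ha hS2 hS4 Real.lipschitzWith_cos Real.abs_cos_le_one _ _ _ _)

lemma norm_Hu_sub_le (hF : IsDriftF a F) (ha : ∀ n, 0 ≤ a n)
    (hS2 : Summable fun n : ℕ+ => a n * (n : ℝ) ^ 2) (y y' : Hsp) :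
    ‖Hu (F y) - Hu (F y')‖ ≤ √(∑' n : ℕ+, a n * (n : ℝ) ^ 2) * |Hx y - Hx y'| :=
  norm_le_of_sq_eq_sqrt_mul_sub ha hS2 Real.lipschitzWith_cos _ fun n => by
    rw [lp.coeFn_sub, Pi.sub_apply, (hF y).2.1, (hF y').2.1]; ring

lemma norm_Hv_sub_le (hF : IsDriftF a F) (ha : ∀ n, 0 ≤ a n)
    (hS2 : Summable fun n : ℕ+ => a n * (n : ℝ) ^ 2) (y y' : Hsp) :
    ‖Hv (F y) - Hv (F y')‖ ≤ √(∑' n : ℕ+, a n * (n : ℝ) ^ 2) * |Hx y - Hx y'| :=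
  norm_le_of_sq_eq_sqrt_mul_sub ha hS2 Real.lipschitzWith_sin _ fun n => by
    rw [lp.coeFn_sub, Pi.sub_apply, (hF y).2.2, (hF y').2.2]; ring

lemma norm_sub_le (hF : IsDriftF a F) (ha : ∀ n, 0 ≤ a n) (hO5 : MemO5 a) (y y' : Hsp) :
    ‖F y - F y'‖ ≤ (4 * √(∑' n : ℕ+, a n * (n : ℝ) ^ 2) +
      2 * √(∑' n : ℕ+, a n * (n : ℝ) ^ 4) * ‖y'‖) * ‖y - y'‖ := by
  have hS2 := hO5.summable_mul_sq ha
  have hS4 := hO5.summable_mul_pow_four ha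
  set Q2 := √(∑' n : ℕ+, a n * (n : ℝ) ^ 2)
  set Q4 := √(∑' n : ℕ+, a n * (n : ℝ) ^ 4)
  have hx : |Hx y - Hx y'| ≤ ‖y - y'‖ := abs_Hx_le_norm (y - y')
  have hu : ‖Hu y - Hu y'‖ ≤ ‖y - y'‖ := norm_Hu_le_norm (y - y')
  have hv : ‖Hv y - Hv y'‖ ≤ ‖y - y'‖ := norm_Hv_le_norm (y - y')
  have hu' := norm_Hu_le_norm y'
  have hv' := norm_Hv_le_norm y'
  have hQ2 : 0 ≤ Q2 := Real.sqrt_nonneg _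
  have hQ4 : 0 ≤ Q4 := Real.sqrt_nonneg _
  calc ‖F y - F y'‖ ≤ |Hx (F y) - Hx (F y')| + ‖Hu (F y) - Hu (F y')‖ + ‖Hv (F y) - Hv (F y')‖ :=
        norm_le_abs_Hx_add_norm_Hu_add_norm_Hv (F y - F y')
    _ ≤ Q2 * ‖Hu y - Hu y'‖ + Q4 * |Hx y - Hx y'| * ‖Hu y'‖ +
          (Q2 * ‖Hv y - Hv y'‖ + Q4 * |Hx y - Hx y'| * ‖Hv y'‖) +
          Q2 * |Hx y - Hx y'| + Q2 * |Hx y - Hx y'| := by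
        gcongr
        exacts [hF.abs_Hx_sub_le ha hS2 hS4 y y', hF.norm_Hu_sub_le ha hS2 y y',
          hF.norm_Hv_sub_le ha hS2 y y']
    _ ≤ Q2 * ‖y - y'‖ + Q4 * ‖y - y'‖ * ‖y'‖ + (Q2 * ‖y - y'‖ + Q4 * ‖y - y'‖ * ‖y'‖) +
          Q2 * ‖y - y'‖ + Q2 * ‖y - y'‖ := by gcongr
    _ = (4 * Q2 + 2 * Q4 * ‖y'‖) * ‖y - y'‖ := by ring

end IsDriftF

/-- `F` is locally Lipschitz on `H`: for every `R > 0` there is a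
constant `C(R,(aₙ)) > 0` such that `‖F(y) − F(ỹ)‖ ≤ C ‖y − ỹ‖` for all `y, ỹ` in the
closed ball of radius `R` centered at `0`. -/
theorem stmt2 (a : ℕ+ → ℝ) (hpos : ∀ n, 0 < a n) (hO5 : MemO5 a)
    (F : Hsp → Hsp) (hF : IsDriftF a F) :
    ∀ R > (0 : ℝ), ∃ C > (0 : ℝ), ∀ y ∈ Metric.closedBall (0 : Hsp) R,
      ∀ ytil ∈ Metric.closedBall (0 : Hsp) R,
        ‖F y - F ytil‖ ≤ C * ‖y - ytil‖ := by
  intro R hR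
  refine ⟨4 * √(∑' n : ℕ+, a n * (n : ℝ) ^ 2) + 2 * √(∑' n : ℕ+, a n * (n : ℝ) ^ 4) * R + 1,
    by positivity, fun y _ ytil hytil => ?_⟩
  have hR' : ‖ytil‖ ≤ R := mem_closedBall_zero_iff.mp hytil
  calc ‖F y - F ytil‖ ≤ (4 * √(∑' n : ℕ+, a n * (n : ℝ) ^ 2) +
        2 * √(∑' n : ℕ+, a n * (n : ℝ) ^ 4) * ‖ytil‖) * ‖y - ytil‖ :=
        hF.norm_sub_le (fun n => (hpos n).le) hO5 y ytil
    _ ≤ (4 * √(∑' n : ℕ+, a n * (n : ℝ) ^ 2) +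
        2 * √(∑' n : ℕ+, a n * (n : ℝ) ^ 4) * R + 1) * ‖y - ytil‖ := by
        gcongr ?_ * _
        linarith [mul_le_mul_of_nonneg_left hR' (Real.sqrt_nonneg (∑' n : ℕ+, a n * (n : ℝ) ^ 4))]
end
end

section
/- There exists a constant C > 0, depending only on the sequence (a_n)_{n≥1}, such that for all x, x̃ ∈ ℝ and all u, ũ, v, ṽ ∈ ℓ², |Σ_{n≥1} a_n^{1/2} n (sin(nx) u_n + cos(nx) v_n − sin(nx̃) ũ_n − cos(nx̃) ṽ_n)|² ≤ C (1 + ‖ũ‖_{ℓ²}² + ‖ṽ‖_{ℓ²}²) (|x − x̃|² + ‖u − ũ‖_{ℓ²}² + ‖v − ṽ‖_{ℓ²}²). -/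
noncomputable section

open scoped BigOperators

/-!
Write the summand as `wₙ ((u - ũ)ₙ sin nx + (v - ṽ)ₙ cos nx + ũₙ (sin nx - sin nx̃)
+ ṽₙ (cos nx - cos nx̃))` with `wₙ = √aₙ n`. Each of the four weight sequences lies in `ℓ²`
with squared norm at most `B = Σ |aₙ| n⁴` (times `|x - x̃|²` for the last two, as sine and
cosine are 1-Lipschitz), and `B < ∞` because `|aₙ| n⁴ ≤ ((1 + n²)⁵ aₙ² + n⁻²) / 2`.
Cauchy–Schwarz on each of the four pairings then gives the bound with `C = 4 (B + 1)`.
-/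

open Real

theorem add_add_add_sq_le {R : Type*} [CommRing R] [LinearOrder R] [IsStrictOrderedRing R]
    (a b c d : R) : (a + b + c + d) ^ 2 ≤ 4 * (a ^ 2 + b ^ 2 + c ^ 2 + d ^ 2) := by
  nlinarith [sq_nonneg (a - b), sq_nonneg (a - c), sq_nonneg (a - d), sq_nonneg (b - c),
    sq_nonneg (b - d), sq_nonneg (c - d)]

theorem sq_sqrt_mul_mul_le (a : ℝ) {r s t : ℝ} (hs : s ^ 2 ≤ r ^ 2 * t) :
    (√a * r * s) ^ 2 ≤ |a| * r ^ 4 * t :=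
  calc (√a * r * s) ^ 2 = √a ^ 2 * (r ^ 2 * s ^ 2) := by ring
    _ ≤ |a| * (r ^ 2 * (r ^ 2 * t)) := by
      gcongr
      rw [sq_sqrt']
      exact max_le (le_abs_self a) (abs_nonneg a)
    _ = |a| * r ^ 4 * t := by ring

theorem sq_sub_le_of_abs_sub_le {f : ℝ → ℝ} (hf : ∀ p q, |f p - f q| ≤ |p - q|) (r x y : ℝ) :
    (f (r * x) - f (r * y)) ^ 2 ≤ r ^ 2 * (x - y) ^ 2 :=
  calc (f (r * x) - f (r * y)) ^ 2 ≤ (r * x - r * y) ^ 2 := sq_le_sq.mpr (hf _ _)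
    _ = r ^ 2 * (x - y) ^ 2 := by ring

theorem summable_abs_mul_pow_four {a : ℕ+ → ℝ}
    (hO5 : Summable fun n : ℕ+ => (1 + (n : ℝ) ^ 2) ^ 5 * a n ^ 2) :
    Summable fun n : ℕ+ => |a n| * (n : ℝ) ^ 4 := by
  have hinv : Summable fun n : ℕ+ => ((n : ℝ) ^ 2)⁻¹ :=
    (summable_nat_pow_inv.2 one_lt_two).comp_injective PNat.coe_injective
  refine .of_nonneg_of_le (fun n => by positivity) (fun n => ?_) ((hO5.add hinv).div_const 2)
  have hn : (0 : ℝ) < n := by exact_mod_cast n.pos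
  -- AM-GM applied to `|aₙ| n⁴ = (|aₙ| n⁵) n⁻¹`
  have hamgm := two_mul_le_add_sq (|a n| * (n : ℝ) ^ 5) (n : ℝ)⁻¹
  have hpow : (n : ℝ) ^ 10 ≤ (1 + (n : ℝ) ^ 2) ^ 5 := by
    rw [show (n : ℝ) ^ 10 = ((n : ℝ) ^ 2) ^ 5 by ring]; gcongr; linarith
  have hsplit : |a n| * (n : ℝ) ^ 5 * (n : ℝ)⁻¹ = |a n| * (n : ℝ) ^ 4 := by field_simp
  have hsq : (|a n| * (n : ℝ) ^ 5) ^ 2 ≤ (1 + (n : ℝ) ^ 2) ^ 5 * a n ^ 2 := by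
    rw [mul_pow, ← pow_mul, sq_abs, mul_comm]; exact mul_le_mul_of_nonneg_right hpow (sq_nonneg _)
  rw [inv_pow] at hamgm
  linarith

theorem exists_hasSum_mul_sq_le {ι : Type*} {w b : ι → ℝ} {t : ℝ} (hb : Summable b)
    (hw : ∀ i, w i ^ 2 ≤ b i * t) (g : lp (fun _ : ι => ℝ) 2) :
    ∃ s, HasSum (fun i => w i * g i) s ∧ s ^ 2 ≤ (∑' i, b i) * t * ‖g‖ ^ 2 := by
  have hbt : Summable fun i => b i * t := hb.mul_right t
  let W : lp (fun _ : ι => ℝ) 2 :=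
    ⟨w, memℓp_gen <| .of_nonneg_of_le (fun _ => by positivity) (fun i => by simpa using hw i) hbt⟩
  refine ⟨inner ℝ W g, ?_, ?_⟩
  · simpa [W, mul_comm] using lp.hasSum_inner (𝕜 := ℝ) W g
  have hW : ‖W‖ ^ 2 ≤ (∑' i, b i) * t := by
    rw [← real_inner_self_eq_norm_sq, lp.inner_eq_tsum, ← tsum_mul_right]
    exact (lp.hasSum_inner W W).summable.tsum_le_tsum (fun i => by simpa [W, ← sq] using hw i) hbt
  calc inner ℝ W g ^ 2 ≤ (‖W‖ * ‖g‖) ^ 2 := sq_le_sq.mpr (by simpa using abs_real_inner_le_norm W g)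
    _ ≤ (∑' i, b i) * t * ‖g‖ ^ 2 := by rw [mul_pow]; gcongr

theorem stmt6_general (a : ℕ+ → ℝ)
    (hO5 : Summable fun n : ℕ+ => (1 + (n : ℝ) ^ 2) ^ 5 * a n ^ 2) :
    ∃ C > (0 : ℝ), ∀ (x xtil : ℝ) (u util v vtil : l2),
      |∑' n : ℕ+, Real.sqrt (a n) * (n : ℝ) *
          (Real.sin ((n : ℝ) * x) * u n + Real.cos ((n : ℝ) * x) * v n
            - Real.sin ((n : ℝ) * xtil) * util n
            - Real.cos ((n : ℝ) * xtil) * vtil n)| ^ 2 ≤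
        C * (1 + ‖util‖ ^ 2 + ‖vtil‖ ^ 2) *
          (|x - xtil| ^ 2 + ‖u - util‖ ^ 2 + ‖v - vtil‖ ^ 2) := by
  have hB := summable_abs_mul_pow_four hO5
  set B := ∑' n : ℕ+, |a n| * (n : ℝ) ^ 4
  have hB0 : 0 ≤ B := tsum_nonneg fun n => by positivity
  refine ⟨4 * (B + 1), by positivity, fun x xtil u util v vtil => ?_⟩
  have hn (n : ℕ+) : (1 : ℝ) ≤ (n : ℝ) ^ 2 * 1 := by
    rw [mul_one]; exact one_le_pow₀ (by exact_mod_cast n.pos)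
  obtain ⟨s₁, hs₁, hs₁B⟩ := exists_hasSum_mul_sq_le hB (w := fun n : ℕ+ => √(a n) * n * sin (n * x))
    (fun n => sq_sqrt_mul_mul_le (a n) ((sin_sq_le_one _).trans (hn n))) (u - util)
  obtain ⟨s₂, hs₂, hs₂B⟩ := exists_hasSum_mul_sq_le hB (w := fun n : ℕ+ => √(a n) * n * cos (n * x))
    (fun n => sq_sqrt_mul_mul_le (a n) ((cos_sq_le_one _).trans (hn n))) (v - vtil)
  obtain ⟨s₃, hs₃, hs₃B⟩ := exists_hasSum_mul_sq_le hB
    (w := fun n : ℕ+ => √(a n) * n * (sin (n * x) - sin (n * xtil)))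
    (fun n => sq_sqrt_mul_mul_le (a n) (sq_sub_le_of_abs_sub_le abs_sin_sub_sin_le _ _ _)) util
  obtain ⟨s₄, hs₄, hs₄B⟩ := exists_hasSum_mul_sq_le hB
    (w := fun n : ℕ+ => √(a n) * n * (cos (n * x) - cos (n * xtil)))
    (fun n => sq_sqrt_mul_mul_le (a n) (sq_sub_le_of_abs_sub_le abs_cos_sub_cos_le _ _ _)) vtil
  have hsum : ∑' n : ℕ+, √(a n) * n * (sin (n * x) * u n + cos (n * x) * v n
      - sin (n * xtil) * util n - cos (n * xtil) * vtil n) = s₁ + s₂ + s₃ + s₄ := by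
    convert (((hs₁.add hs₂).add hs₃).add hs₄).tsum_eq using 3 with n
    simp only [lp.coeFn_sub, Pi.sub_apply]
    ring
  rw [hsum, sq_abs, sq_abs (x - xtil)]
  calc (s₁ + s₂ + s₃ + s₄) ^ 2 ≤ 4 * (s₁ ^ 2 + s₂ ^ 2 + s₃ ^ 2 + s₄ ^ 2) := add_add_add_sq_le ..
    _ ≤ 4 * (B * ((1 + ‖util‖ ^ 2 + ‖vtil‖ ^ 2) *
          ((x - xtil) ^ 2 + ‖u - util‖ ^ 2 + ‖v - vtil‖ ^ 2))) := by
      gcongr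
      nlinarith
    _ ≤ 4 * (B + 1) * (1 + ‖util‖ ^ 2 + ‖vtil‖ ^ 2) *
          ((x - xtil) ^ 2 + ‖u - util‖ ^ 2 + ‖v - vtil‖ ^ 2) := by
      rw [mul_assoc (4 * (B + 1)), mul_assoc 4]; gcongr; linarith

/-- There is a constant `C > 0`, depending only on `(aₙ)`, such that
for all `x, x̃ ∈ ℝ` and `u, ũ, v, ṽ ∈ ℓ²`,
`|Σ √aₙ n (sin(nx)uₙ + cos(nx)vₙ − sin(nx̃)ũₙ − cos(nx̃)ṽₙ)|²
  ≤ C (1 + ‖ũ‖² + ‖ṽ‖²)(|x − x̃|² + ‖u − ũ‖² + ‖v − ṽ‖²)`. -/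
theorem stmt6 (a : ℕ+ → ℝ) (hpos : ∀ n, 0 < a n)
    (hO5 : Summable fun n : ℕ+ => (1 + (n : ℝ) ^ 2) ^ 5 * a n ^ 2) :
    ∃ C > (0 : ℝ), ∀ (x xtil : ℝ) (u util v vtil : l2),
      |∑' n : ℕ+, Real.sqrt (a n) * (n : ℝ) *
          (Real.sin ((n : ℝ) * x) * u n + Real.cos ((n : ℝ) * x) * v n
            - Real.sin ((n : ℝ) * xtil) * util n
            - Real.cos ((n : ℝ) * xtil) * vtil n)| ^ 2 ≤
        C * (1 + ‖util‖ ^ 2 + ‖vtil‖ ^ 2) *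
          (|x - xtil| ^ 2 + ‖u - util‖ ^ 2 + ‖v - vtil‖ ^ 2) :=
  stmt6_general a hO5
end
end

section
/- Let μ be the countable product, over n ≥ 1, of the Gaussian measures N(0, 1/n²) on ℝ, regarded as a probability measure on the product space ℝ^{ℕ≥1}. Then the set of square-summable sequences {(u_n)_{n≥1} : Σ_{n≥1} u_n² < ∞} has μ-measure 1. -/
/-! Only the one-dimensional marginals matter: the coordinate `u n` has law `N(0, 1/n²)`, so by
monotone convergence `∫ ∑ₙ u n ² dμ = ∑ₙ 1/n² < ∞`, and a nonnegative function with finite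
integral is finite almost everywhere. -/

open scoped NNReal ENNReal
open MeasureTheory ProbabilityTheory

lemma lintegral_enorm_sub_sq_gaussianReal (m : ℝ) (v : ℝ≥0) :
    ∫⁻ x, ‖x - m‖ₑ ^ 2 ∂gaussianReal m v = v := by
  have h := ofReal_variance (memLp_id_gaussianReal (μ := m) (v := v) 2)
  rw [variance_id_gaussianReal, ENNReal.ofReal_coe_nnreal] at h
  rw [h, evariance]
  simp only [id, integral_id_gaussianReal]

lemma ae_summable_sq_of_tsum_lintegral_ne_top {ι Ω : Type*} [Countable ι] [MeasurableSpace Ω]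
    {μ : Measure Ω} {X : ι → Ω → ℝ} (hX : ∀ n, AEMeasurable (X n) μ)
    (h : ∑' n, ∫⁻ ω, ‖X n ω‖ₑ ^ 2 ∂μ ≠ ∞) :
    ∀ᵐ ω ∂μ, Summable fun n => X n ω ^ 2 := by
  have hX2 : ∀ n, AEMeasurable (fun ω => ‖X n ω‖ₑ ^ 2) μ := fun n => (hX n).enorm.pow_const 2
  rw [← lintegral_tsum hX2] at h
  filter_upwards [ae_lt_top' (AEMeasurable.tsum hX2) h] with ω hω
  simp only [enorm_eq_nnnorm, ← ENNReal.coe_pow] at hω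
  have := NNReal.summable_coe.mpr (ENNReal.tsum_coe_ne_top_iff_summable.mp hω.ne)
  simpa only [NNReal.coe_pow, coe_nnnorm, Real.norm_eq_abs, sq_abs] using this

lemma tsum_one_div_pnat_sq_ne_top : ∑' n : ℕ+, ((1 / ((n : ℕ) : ℝ≥0) ^ 2 : ℝ≥0) : ℝ≥0∞) ≠ ∞ := by
  rw [ENNReal.tsum_coe_ne_top_iff_summable, ← NNReal.summable_coe]
  push_cast
  exact summable_pnat_iff_summable_nat.mpr (Real.summable_one_div_nat_pow.mpr one_lt_two)

/-- Let `μ` be the countable product, over `n ≥ 1`, of the Gaussian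
measures `N(0, 1/n²)` on `ℝ` (characterized here, as a probability measure on
`ℝ^{ℕ≥1}`, by its finite-dimensional cylinder probabilities). Then the set of
square-summable sequences has `μ`-measure `1`. -/
theorem stmt12 (μ : Measure (ℕ+ → ℝ)) [IsProbabilityMeasure μ]
    (hμ : ∀ (s : Finset ℕ+) (A : ℕ+ → Set ℝ), (∀ n, MeasurableSet (A n)) →
      μ {u : ℕ+ → ℝ | ∀ n ∈ s, u n ∈ A n} =
        ∏ n ∈ s, gaussianReal 0 (1 / ((n : ℕ) : ℝ≥0) ^ 2) (A n)) :
    μ {u : ℕ+ → ℝ | Summable fun n : ℕ+ => (u n) ^ 2} = 1 := by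
  have marginal (n : ℕ+) : μ.map (fun u => u n) = gaussianReal 0 (1 / ((n : ℕ) : ℝ≥0) ^ 2) := by
    ext s hs
    rw [Measure.map_apply (measurable_pi_apply n) hs]
    simpa [Set.preimage] using hμ {n} (fun _ => s) (fun _ => hs)
  have second_moment (n : ℕ+) :
      ∫⁻ u, ‖u n‖ₑ ^ 2 ∂μ = ((1 / ((n : ℕ) : ℝ≥0) ^ 2 : ℝ≥0) : ℝ≥0∞) := by
    rw [← lintegral_map (f := fun x : ℝ => ‖x‖ₑ ^ 2) (by fun_prop) (measurable_pi_apply n),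
      marginal n]
    simpa only [sub_zero] using lintegral_enorm_sub_sq_gaussianReal 0 (1 / ((n : ℕ) : ℝ≥0) ^ 2)
  have ae_summable := ae_summable_sq_of_tsum_lintegral_ne_top (μ := μ) (X := fun n u => u n)
    (fun n => (measurable_pi_apply n).aemeasurable)
    (by simpa only [second_moment] using tsum_one_div_pnat_sq_ne_top)
  rw [measure_congr (Filter.eventuallyEq_univ.mpr ae_summable), measure_univ]
end

section
/- Let φ : H → ℝ be bounded, twice continuously Fréchet differentiable with bounded first and second derivatives (φ ∈ C_b²(H)), and for y = (x,u,v) ∈ H define Aφ(y) = Dφ(y)(e₀) · (⟨(n a_n^{1/2} cos(nx))_{n≥1}, v⟩_{ℓ²} + ⟨(n a_n^{1/2} sin(nx))_{n≥1}, u⟩_{ℓ²}) + Σ_{n≥1} a_n^{1/2} cos(nx) Dφ(y)(e_n^u) − Σ_{n≥1} a_n^{1/2} sin(nx) Dφ(y)(e_n^v). Then there exists a constant C > 0, depending only on (a_n)_{n≥1} and on the supremum bounds of the derivatives of φ, such that Aφ(y)² ≤ C (1 + ‖u‖_{ℓ²}² + ‖v‖_{ℓ²}²) for all y ∈ H. 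-/
noncomputable section

open scoped BigOperators RealInnerProductSpace
open MeasureTheory Filter

/-- `e₀ = (1,0,0) ∈ H`. -/
def e0 : Hsp := mkH 1 0 0

/-- `eₙᵘ ∈ H`: the `n`-th standard ℓ²-basis vector placed in the `u`-component. -/
def eu (n : ℕ+) : Hsp := mkH 0 (lp.single 2 n 1) 0

/-- `eₙᵛ ∈ H`: the `n`-th standard ℓ²-basis vector placed in the `v`-component. -/
def ev (n : ℕ+) : Hsp := mkH 0 0 (lp.single 2 n 1)

/-- The first-order part of the Kolmogorov operator:
`Aφ(y) = Dφ(y)(e₀)·(⟨(n√aₙ cos(nx))ₙ, v⟩ + ⟨(n√aₙ sin(nx))ₙ, u⟩)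
 + Σ √aₙ cos(nx) Dφ(y)(eₙᵘ) − Σ √aₙ sin(nx) Dφ(y)(eₙᵛ)`. -/
def Aop (a : ℕ+ → ℝ) (φ : Hsp → ℝ) (y : Hsp) : ℝ :=
  fderiv ℝ φ y e0 *
      ((∑' n : ℕ+, (n : ℝ) * Real.sqrt (a n) * Real.cos ((n : ℝ) * Hx y) * Hv y n) +
        (∑' n : ℕ+, (n : ℝ) * Real.sqrt (a n) * Real.sin ((n : ℝ) * Hx y) * Hu y n)) +
    (∑' n : ℕ+, Real.sqrt (a n) * Real.cos ((n : ℝ) * Hx y) * fderiv ℝ φ y (eu n)) -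
    (∑' n : ℕ+, Real.sqrt (a n) * Real.sin ((n : ℝ) * Hx y) * fderiv ℝ φ y (ev n))

/-!
Membership in `O⁵` makes `(n √aₙ)` summable: with `t = n³ √aₙ` the elementary bound
`t ≤ t⁴ + 1` gives `n √aₙ ≤ n¹⁰ aₙ² + n⁻²`. Put `B = Σ n √aₙ` and let `M` bound `‖Dφ‖`.
Since `|Dφ(y)(e)| ≤ M` on the unit vectors `e₀, eₙᵘ, eₙᵛ` and `|uₙ| ≤ ‖u‖`, `|vₙ| ≤ ‖v‖`,
the four series in `Aφ(y)` are bounded by `B‖v‖`, `B‖u‖`, `BM` and `BM`, so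
`|Aφ(y)| ≤ MB(‖u‖ + ‖v‖ + 2)`, and squaring gives the claim with `C = 12 M²B² + 1`.
-/

lemma le_pow_four_add_one (t : ℝ) : t ≤ t ^ 4 + 1 := by
  nlinarith [sq_nonneg (t ^ 2 - 1), sq_nonneg (t - 1)]

lemma sqrt_pow_four_le_sq (a : ℝ) : Real.sqrt a ^ 4 ≤ a ^ 2 := by
  have h : Real.sqrt a ^ 2 ≤ |a| := calc
    Real.sqrt a ^ 2 ≤ Real.sqrt |a| ^ 2 := by gcongr; exact le_abs_self a
    _ = |a| := Real.sq_sqrt (abs_nonneg a)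
  calc Real.sqrt a ^ 4 = (Real.sqrt a ^ 2) ^ 2 := by ring
    _ ≤ |a| ^ 2 := pow_le_pow_left₀ (sq_nonneg _) h 2
    _ = a ^ 2 := sq_abs a

lemma summable_pnat_inv_sq : Summable fun n : ℕ+ => ((n : ℝ) ^ 2)⁻¹ :=
  (Real.summable_nat_pow_inv.mpr one_lt_two).comp_injective PNat.coe_injective

lemma MemO5.summable_mul_sqrt {a : ℕ+ → ℝ} (ha : MemO5 a) :
    Summable fun n : ℕ+ => (n : ℝ) * Real.sqrt (a n) := by
  refine Summable.of_nonneg_of_le (fun n => by positivity) (fun n => ?_)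
    (ha.add summable_pnat_inv_sq)
  set s := Real.sqrt (a n)
  have hn : (1 : ℝ) ≤ n := Nat.one_le_cast.mpr n.pos
  have hn2 : (0 : ℝ) < (n : ℝ) ^ 2 := by positivity
  have hpow : (n : ℝ) ^ 10 * s ^ 4 ≤ (1 + (n : ℝ) ^ 2) ^ 5 * a n ^ 2 := by
    have hn5 : ((n : ℝ) ^ 2) ^ 5 ≤ (1 + (n : ℝ) ^ 2) ^ 5 := by gcongr; linarith
    calc (n : ℝ) ^ 10 * s ^ 4 = ((n : ℝ) ^ 2) ^ 5 * s ^ 4 := by ring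
      _ ≤ (1 + (n : ℝ) ^ 2) ^ 5 * a n ^ 2 :=
        mul_le_mul hn5 (sqrt_pow_four_le_sq _) (by positivity) (by positivity)
  calc (n : ℝ) * s = (n : ℝ) ^ 3 * s / (n : ℝ) ^ 2 := by field_simp
    _ ≤ (((n : ℝ) ^ 3 * s) ^ 4 + 1) / (n : ℝ) ^ 2 :=
        div_le_div_of_nonneg_right (le_pow_four_add_one _) hn2.le
    _ = (n : ℝ) ^ 10 * s ^ 4 + ((n : ℝ) ^ 2)⁻¹ := by field_simp
    _ ≤ _ := by gcongr

lemma abs_tsum_le_tsum_mul {ι : Type*} {f b : ι → ℝ} {K : ℝ} (hb : Summable b)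
    (h : ∀ i, |f i| ≤ b i * K) : |∑' i, f i| ≤ (∑' i, b i) * K := by
  rw [← tsum_mul_right]
  exact tsum_of_norm_bounded (hb.mul_right K).hasSum fun i =>
    (Real.norm_eq_abs _).trans_le (h i)

lemma abs_mul_mul_le {β β' γ w K : ℝ} (hβ : 0 ≤ β) (hββ' : β ≤ β') (hγ : |γ| ≤ 1)
    (hw : |w| ≤ K) : |β * γ * w| ≤ β' * K := by
  rw [abs_mul, abs_mul, abs_of_nonneg hβ]
  have hβ' : 0 ≤ β' := hβ.trans hββ'
  calc β * |γ| * |w| ≤ β' * 1 * K := by gcongr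
    _ = β' * K := by ring

lemma norm_mkH (x : ℝ) (u v : l2) : ‖mkH x u v‖ = Real.sqrt (x ^ 2 + ‖u‖ ^ 2 + ‖v‖ ^ 2) := by
  rw [eq_comm, Real.sqrt_eq_iff_eq_sq (by positivity) (norm_nonneg _),
    WithLp.prod_norm_sq_eq_of_L2, WithLp.prod_norm_sq_eq_of_L2]
  simp [mkH, add_assoc]

lemma norm_e0 : ‖e0‖ = 1 := by simp [e0, norm_mkH]

lemma norm_eu (n : ℕ+) : ‖eu n‖ = 1 := by simp [eu, norm_mkH, lp.norm_single]

lemma norm_ev (n : ℕ+) : ‖ev n‖ = 1 := by simp [ev, norm_mkH, lp.norm_single]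

lemma abs_apply_le_of_norm_eq_one {L : Hsp →L[ℝ] ℝ} {M : ℝ} (hL : ‖L‖ ≤ M) {w : Hsp}
    (hw : ‖w‖ = 1) : |L w| ≤ M := by
  simpa [hw] using L.le_of_opNorm_le hL w

lemma abs_lp_apply_le_norm (u : l2) (n : ℕ+) : |u n| ≤ ‖u‖ :=
  lp.norm_apply_le_norm two_ne_zero u n

lemma abs_Aop_le {a : ℕ+ → ℝ} (ha : Summable fun n : ℕ+ => (n : ℝ) * Real.sqrt (a n))
    {φ : Hsp → ℝ} {M : ℝ} {y : Hsp} (hM : ‖fderiv ℝ φ y‖ ≤ M) :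
    |Aop a φ y| ≤ M * (∑' n : ℕ+, (n : ℝ) * Real.sqrt (a n)) * (‖Hu y‖ + ‖Hv y‖ + 2) := by
  set B := ∑' n : ℕ+, (n : ℝ) * Real.sqrt (a n)
  have hM0 : 0 ≤ M := (norm_nonneg _).trans hM
  have hsqrt_le (n : ℕ+) : Real.sqrt (a n) ≤ n * Real.sqrt (a n) :=
    le_mul_of_one_le_left (Real.sqrt_nonneg _) (Nat.one_le_cast.mpr n.pos)
  have hv : |∑' n : ℕ+, (n : ℝ) * Real.sqrt (a n) * Real.cos (n * Hx y) * Hv y n| ≤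
      B * ‖Hv y‖ := abs_tsum_le_tsum_mul ha fun n => abs_mul_mul_le (by positivity) le_rfl
        (Real.abs_cos_le_one _) (abs_lp_apply_le_norm _ n)
  have hu : |∑' n : ℕ+, (n : ℝ) * Real.sqrt (a n) * Real.sin (n * Hx y) * Hu y n| ≤
      B * ‖Hu y‖ := abs_tsum_le_tsum_mul ha fun n => abs_mul_mul_le (by positivity) le_rfl
        (Real.abs_sin_le_one _) (abs_lp_apply_le_norm _ n)
  have hdu : |∑' n : ℕ+, Real.sqrt (a n) * Real.cos (n * Hx y) * fderiv ℝ φ y (eu n)| ≤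
      B * M := abs_tsum_le_tsum_mul ha fun n => abs_mul_mul_le (by positivity) (hsqrt_le n)
        (Real.abs_cos_le_one _) (abs_apply_le_of_norm_eq_one hM (norm_eu n))
  have hdv : |∑' n : ℕ+, Real.sqrt (a n) * Real.sin (n * Hx y) * fderiv ℝ φ y (ev n)| ≤
      B * M := abs_tsum_le_tsum_mul ha fun n => abs_mul_mul_le (by positivity) (hsqrt_le n)
        (Real.abs_sin_le_one _) (abs_apply_le_of_norm_eq_one hM (norm_ev n))
  have hd0 := abs_apply_le_of_norm_eq_one hM norm_e0
  unfold Aop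
  calc _ ≤ |fderiv ℝ φ y e0 * (_ + _) + _| + |_| := abs_sub _ _
    _ ≤ |fderiv ℝ φ y e0| * |_ + _| + |_| + |_| := by
        rw [← abs_mul]; gcongr; exact abs_add_le _ _
    _ ≤ M * (B * ‖Hv y‖ + B * ‖Hu y‖) + B * M + B * M := by
        gcongr
        exact (abs_add_le _ _).trans (add_le_add hv hu)
    _ = M * B * (‖Hu y‖ + ‖Hv y‖ + 2) := by ring

theorem stmt15_general (a : ℕ+ → ℝ) (hO5 : MemO5 a)
    (φ : Hsp → ℝ)
    (hb1 : ∃ M : ℝ, ∀ y : Hsp, ‖fderiv ℝ φ y‖ ≤ M) :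
    ∃ C > (0 : ℝ), ∀ y : Hsp,
      (Aop a φ y) ^ 2 ≤ C * (1 + ‖Hu y‖ ^ 2 + ‖Hv y‖ ^ 2) := by
  obtain ⟨M, hM⟩ := hb1
  set B := ∑' n : ℕ+, (n : ℝ) * Real.sqrt (a n)
  refine ⟨12 * M ^ 2 * B ^ 2 + 1, by positivity, fun y => ?_⟩
  set p := ‖Hu y‖
  set q := ‖Hv y‖
  have hA : |Aop a φ y| ≤ M * B * (p + q + 2) := abs_Aop_le hO5.summable_mul_sqrt (hM y)
  have hpq : (p + q + 2) ^ 2 ≤ 12 * (1 + p ^ 2 + q ^ 2) := by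
    nlinarith [sq_nonneg (p - q), sq_nonneg (p - 1), sq_nonneg (q - 1)]
  have hX : 0 ≤ 1 + p ^ 2 + q ^ 2 := by positivity
  calc Aop a φ y ^ 2 = |Aop a φ y| ^ 2 := (sq_abs _).symm
    _ ≤ (M * B * (p + q + 2)) ^ 2 := by gcongr
    _ = M ^ 2 * B ^ 2 * (p + q + 2) ^ 2 := by ring
    _ ≤ M ^ 2 * B ^ 2 * (12 * (1 + p ^ 2 + q ^ 2)) := by gcongr
    _ ≤ (12 * M ^ 2 * B ^ 2 + 1) * (1 + p ^ 2 + q ^ 2) := by nlinarith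

/-- For `φ ∈ C_b²(H)` there is a constant `C > 0`, depending only on
`(aₙ)` and the bounds on the derivatives of `φ`, such that
`Aφ(y)² ≤ C (1 + ‖u‖² + ‖v‖²)` for all `y = (x,u,v) ∈ H`. -/
theorem stmt15 (a : ℕ+ → ℝ) (hpos : ∀ n, 0 < a n) (hO5 : MemO5 a)
    (φ : Hsp → ℝ) (hreg : ContDiff ℝ 2 φ)
    (hb : ∃ M : ℝ, ∀ y : Hsp, |φ y| ≤ M)
    (hb1 : ∃ M : ℝ, ∀ y : Hsp, ‖fderiv ℝ φ y‖ ≤ M)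
    (hb2 : ∃ M : ℝ, ∀ y : Hsp, ‖fderiv ℝ (fderiv ℝ φ) y‖ ≤ M) :
    ∃ C > (0 : ℝ), ∀ y : Hsp,
      (Aop a φ y) ^ 2 ≤ C * (1 + ‖Hu y‖ ^ 2 + ‖Hv y‖ ^ 2) :=
  stmt15_general a hO5 φ hb1
end
end

section
/- Let X : [0,∞) → ℝ be measurable, let (u₀ⁿ)_{n≥1} ∈ ℓ², and set uₜⁿ = u₀ⁿ + a_n^{1/2} ∫₀ᵗ cos(n X_s) ds and vₜⁿ = v₀ⁿ − a_n^{1/2} ∫₀ᵗ sin(n X_s) ds for t ≥ 0, with (v₀ⁿ)_{n≥1} ∈ ℓ². Then for every t ≥ 0: (u₀ⁿ)_n ∈ O¹ if and only if (uₜⁿ)_n ∈ O¹, and (v₀ⁿ)_n ∈ O¹ if and only if (vₜⁿ)_n ∈ O¹. (This yields that the set A = ℝ × O¹ × O¹ is invariant under the dynamics, which is the key to the failure of the strong Feller property.) -/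
/-!
The perturbation `√aₙ ∫₀ᵗ cos(n Xₛ) ds` (resp. `sin`) is bounded by `t √aₙ`, so its weighted
square `(1 + n²) aₙ t²` is summable as soon as `Σ (1 + n²) aₙ < ∞`, which follows from
`a ∈ O⁵` by the AM-GM bound `2 w aₙ ≤ w⁵ aₙ² + w⁻³` with `w = 1 + n²`. Adding a sequence of finite
weighted ℓ² norm does not change whether the weighted ℓ² norm is finite.
-/

noncomputable section

open scoped BigOperators
open MeasureTheory

section WeightedSummable

variable {ι : Type*}

lemma summable_mul_sq_add {c u b : ι → ℝ} (hc : ∀ i, 0 ≤ c i)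
    (hu : Summable fun i => c i * u i ^ 2) (hb : Summable fun i => c i * b i ^ 2) :
    Summable fun i => c i * (u i + b i) ^ 2 := by
  refine .of_nonneg_of_le (fun i => mul_nonneg (hc i) (sq_nonneg _)) (fun i => ?_)
    ((hu.add hb).mul_left 2)
  calc c i * (u i + b i) ^ 2 ≤ c i * (2 * (u i ^ 2 + b i ^ 2)) :=
        mul_le_mul_of_nonneg_left add_sq_le (hc i)
    _ = 2 * (c i * u i ^ 2 + c i * b i ^ 2) := by ring

lemma summable_mul_sq_add_iff {c u b : ι → ℝ} (hc : ∀ i, 0 ≤ c i)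
    (hb : Summable fun i => c i * b i ^ 2) :
    (Summable fun i => c i * u i ^ 2) ↔ Summable fun i => c i * (u i + b i) ^ 2 := by
  refine ⟨fun hu => summable_mul_sq_add hc hu hb, fun h => ?_⟩
  simpa using summable_mul_sq_add (b := fun i => -b i) hc h (by simpa using hb)

lemma summable_mul_of_summable_pow_five_mul_sq {w a : ι → ℝ} (hw : ∀ i, 0 < w i)
    (h5 : Summable fun i => w i ^ 5 * a i ^ 2) (h3 : Summable fun i => (w i ^ 3)⁻¹) :
    Summable fun i => w i * a i := by
  refine .of_norm_bounded ((h5.add h3).mul_left (1 / 2)) fun i => ?_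
  have hw3 : 0 < w i ^ 3 := pow_pos (hw i) 3
  -- multiplied by `2 w³`, the bound reads `2 w⁴ |a| ≤ (w⁴ |a|)² + 1`
  have key : 2 * (w i ^ 4 * |a i|) ≤ (w i ^ 4 * |a i|) ^ 2 + 1 := by
    nlinarith [sq_nonneg (w i ^ 4 * |a i| - 1)]
  rw [Real.norm_eq_abs, abs_mul, abs_of_pos (hw i), ← mul_le_mul_iff_of_pos_left hw3]
  calc w i ^ 3 * (w i * |a i|) = 1 / 2 * (2 * (w i ^ 4 * |a i|)) := by ring
    _ ≤ 1 / 2 * ((w i ^ 4 * |a i|) ^ 2 + 1) := by gcongr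
    _ = w i ^ 3 * (1 / 2 * (w i ^ 5 * a i ^ 2 + (w i ^ 3)⁻¹)) := by
        rw [mul_pow, sq_abs]
        linear_combination (-1 / 2 : ℝ) * mul_inv_cancel₀ hw3.ne'

lemma summable_mul_sq_sqrt_mul {c a I : ι → ℝ} {t : ℝ} (hc : ∀ i, 0 ≤ c i) (ha : ∀ i, 0 ≤ a i)
    (hca : Summable fun i => c i * a i) (hI : ∀ i, |I i| ≤ t) :
    Summable fun i => c i * (Real.sqrt (a i) * I i) ^ 2 := by
  refine .of_nonneg_of_le (fun i => mul_nonneg (hc i) (sq_nonneg _)) (fun i => ?_)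
    (hca.mul_left (t ^ 2))
  have hIt : I i ^ 2 ≤ t ^ 2 := sq_le_sq' (abs_le.mp (hI i)).1 (abs_le.mp (hI i)).2
  calc c i * (Real.sqrt (a i) * I i) ^ 2 = c i * a i * I i ^ 2 := by
        rw [mul_pow, Real.sq_sqrt (ha i)]; ring
    _ ≤ c i * a i * t ^ 2 := mul_le_mul_of_nonneg_left hIt (mul_nonneg (hc i) (ha i))
    _ = t ^ 2 * (c i * a i) := by ring

end WeightedSummable

lemma summable_inv_one_add_sq_pow_three : Summable fun n : ℕ+ => ((1 + (n : ℝ) ^ 2) ^ 3)⁻¹ := by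
  have hsq : Summable fun n : ℕ+ => ((n : ℝ) ^ 2)⁻¹ :=
    (Real.summable_nat_pow_inv.mpr one_lt_two).comp_injective PNat.coe_injective
  refine .of_nonneg_of_le (fun n => by positivity) (fun n => ?_) hsq
  have hle : (n : ℝ) ^ 2 ≤ (1 + (n : ℝ) ^ 2) ^ 3 :=
    calc (n : ℝ) ^ 2 ≤ 1 + (n : ℝ) ^ 2 := by linarith
      _ ≤ (1 + (n : ℝ) ^ 2) ^ 3 :=
        le_self_pow₀ (le_add_of_nonneg_right (sq_nonneg _)) three_ne_zero
  exact inv_anti₀ (by positivity) hle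

lemma abs_setIntegral_Ioc_le {f : ℝ → ℝ} (hf : ∀ s, |f s| ≤ 1) {t : ℝ} (ht : 0 ≤ t) :
    |∫ s in Set.Ioc 0 t, f s| ≤ t := by
  have h := norm_setIntegral_le_of_norm_le_const (f := f) (μ := volume)
    (s := Set.Ioc 0 t) (C := 1)
    (by simp [Real.volume_Ioc]) (fun s _ => (Real.norm_eq_abs _).trans_le (hf s))
  rwa [Real.volume_real_Ioc_of_le ht, one_mul, sub_zero] at h

theorem stmt16_general (a : ℕ+ → ℝ) (hpos : ∀ n, 0 < a n)
    (hO5 : Summable fun n : ℕ+ => (1 + (n : ℝ) ^ 2) ^ 5 * a n ^ 2)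
    (X : ℝ → ℝ) (u0 v0 : l2) :
    ∀ t ≥ (0 : ℝ),
      ((Summable fun n : ℕ+ => (1 + (n : ℝ) ^ 2) * (u0 n) ^ 2) ↔
        Summable fun n : ℕ+ => (1 + (n : ℝ) ^ 2) *
          (u0 n + Real.sqrt (a n) * ∫ s in Set.Ioc (0 : ℝ) t, Real.cos ((n : ℝ) * X s)) ^ 2) ∧
      ((Summable fun n : ℕ+ => (1 + (n : ℝ) ^ 2) * (v0 n) ^ 2) ↔
        Summable fun n : ℕ+ => (1 + (n : ℝ) ^ 2) *
          (v0 n - Real.sqrt (a n) * ∫ s in Set.Ioc (0 : ℝ) t, Real.sin ((n : ℝ) * X s)) ^ 2) := by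
  intro t ht
  have hweight : Summable fun n : ℕ+ => (1 + (n : ℝ) ^ 2) * a n :=
    summable_mul_of_summable_pow_five_mul_sq (fun n => by positivity) hO5
      summable_inv_one_add_sq_pow_three
  have perturb : ∀ I : ℕ+ → ℝ, (∀ n, |I n| ≤ t) → ∀ u : ℕ+ → ℝ,
      (Summable fun n : ℕ+ => (1 + (n : ℝ) ^ 2) * u n ^ 2) ↔
        Summable fun n : ℕ+ => (1 + (n : ℝ) ^ 2) * (u n + Real.sqrt (a n) * I n) ^ 2 :=
    fun I hI _ => summable_mul_sq_add_iff (fun n => by positivity)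
      (summable_mul_sq_sqrt_mul (fun n => by positivity) (fun n => (hpos n).le) hweight hI)
  refine ⟨perturb _ (fun n => abs_setIntegral_Ioc_le (fun s => Real.abs_cos_le_one _) ht) _, ?_⟩
  simpa only [sub_eq_add_neg, mul_neg] using
    perturb (fun n => -∫ s in Set.Ioc (0 : ℝ) t, Real.sin ((n : ℝ) * X s))
      (fun n => by rw [abs_neg]; exact abs_setIntegral_Ioc_le (fun s => Real.abs_sin_le_one _) ht)
      (fun n => v0 n)

/-- With `uₜⁿ = u₀ⁿ + √aₙ ∫₀ᵗ cos(n Xₛ) ds` and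
`vₜⁿ = v₀ⁿ − √aₙ ∫₀ᵗ sin(n Xₛ) ds`, for every `t ≥ 0` one has
`(u₀ⁿ)ₙ ∈ O¹ ↔ (uₜⁿ)ₙ ∈ O¹` and `(v₀ⁿ)ₙ ∈ O¹ ↔ (vₜⁿ)ₙ ∈ O¹`, where
`O¹ = {(cₙ)ₙ : Σ (1+n²) cₙ² < ∞}`. -/
theorem stmt16 (a : ℕ+ → ℝ) (hpos : ∀ n, 0 < a n)
    (hO5 : Summable fun n : ℕ+ => (1 + (n : ℝ) ^ 2) ^ 5 * a n ^ 2)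
    (X : ℝ → ℝ) (hX : Measurable X) (u0 v0 : l2) :
    ∀ t ≥ (0 : ℝ),
      ((Summable fun n : ℕ+ => (1 + (n : ℝ) ^ 2) * (u0 n) ^ 2) ↔
        Summable fun n : ℕ+ => (1 + (n : ℝ) ^ 2) *
          (u0 n + Real.sqrt (a n) * ∫ s in Set.Ioc (0 : ℝ) t, Real.cos ((n : ℝ) * X s)) ^ 2) ∧
      ((Summable fun n : ℕ+ => (1 + (n : ℝ) ^ 2) * (v0 n) ^ 2) ↔
        Summable fun n : ℕ+ => (1 + (n : ℝ) ^ 2) *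
          (v0 n - Real.sqrt (a n) * ∫ s in Set.Ioc (0 : ℝ) t, Real.sin ((n : ℝ) * X s)) ^ 2) :=
  stmt16_general a hpos hO5 X u0 v0
end
end
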